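/- arXiv:2303.05715 — 2 statements merged into one kernel-verified Lean document; each statement's English description precedes it below -/
import Mathlib

section
/- Let $y_0, y_1, y_2$ be real numbers and for $\beta > 0$ define $p_i(\beta) = e^{\beta y_i} / \sum_{j=0}^{2} e^{\beta y_j}$. Then the Shannon entropy $H(\beta) = -\sum_{i=0}^{2} p_i(\beta) \log p_i(\beta)$ is monotonically decreasing in $\beta$ on $(0, \infty)$; that is, for $0 < \beta_1 \le \beta_2$, $H(\beta_2) \le H(\beta_1)$. -/
open Real Finset

noncomputable def softmax (y : Fin 3 → ℝ) (β : ℝ) (i : Fin 3) : ℝ :=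
  Real.exp (β * y i) / ∑ j, Real.exp (β * y j)

noncomputable def softmaxEntropy (y : Fin 3 → ℝ) (β : ℝ) : ℝ :=
  -∑ i, softmax y β i * Real.log (softmax y β i)

/-!
With `Mₖ(β) = ∑ yᵢᵏ exp (β yᵢ)` and `Z = M₀`, the entropy of the Gibbs distribution
is `H(β) = log Z - β M₁ / Z`. Since `Z' = M₁` and `M₁' = M₂`, the two `M₁ / Z` terms cancel in `H'`,
leaving `H'(β) = -β (Z M₂ - M₁²) / Z²`: minus `β` times the variance of `y` under the Gibbs
distribution, which is nonnegative by Cauchy–Schwarz.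
-/

namespace GibbsDistribution

variable {ι : Type*} [Fintype ι] (y : ι → ℝ)

noncomputable def expMoment (k : ℕ) (β : ℝ) : ℝ := ∑ i, y i ^ k * exp (β * y i)

noncomputable def entropy (β : ℝ) : ℝ :=
  log (expMoment y 0 β) - β * (expMoment y 1 β / expMoment y 0 β)

lemma expMoment_zero (β : ℝ) : expMoment y 0 β = ∑ i, exp (β * y i) := by
  simp [expMoment]

lemma expMoment_zero_pos [Nonempty ι] (β : ℝ) : 0 < expMoment y 0 β := by
  rw [expMoment_zero]
  exact sum_pos (fun i _ => exp_pos _) univ_nonempty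

lemma hasDerivAt_expMoment (k : ℕ) (β : ℝ) :
    HasDerivAt (expMoment y k) (expMoment y (k + 1) β) β := by
  have hterm (i : ι) : HasDerivAt (fun b => y i ^ k * exp (b * y i))
      (y i ^ (k + 1) * exp (β * y i)) β :=
    ((hasDerivAt_mul_const (y i)).exp.const_mul (y i ^ k)).congr_deriv (by ring)
  exact HasDerivAt.fun_sum (u := univ) fun i _ => hterm i

lemma sq_expMoment_one_le (β : ℝ) :
    expMoment y 1 β ^ 2 ≤ expMoment y 0 β * expMoment y 2 β :=
  sum_sq_le_sum_mul_sum_of_sq_le_mul univ (fun _ _ => by positivity)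
    (fun _ _ => by positivity) fun _ _ => (by ring : _ = _).le

lemma neg_sum_mul_log_eq_entropy [Nonempty ι] (β : ℝ) :
    -∑ i, exp (β * y i) / expMoment y 0 β * log (exp (β * y i) / expMoment y 0 β)
      = entropy y β := by
  have hZ := (expMoment_zero_pos y β).ne'
  have hmean : ∑ i, exp (β * y i) / expMoment y 0 β * (β * y i)
      = β * (expMoment y 1 β / expMoment y 0 β) := by
    simp only [expMoment, pow_one, mul_sum, sum_div]
    exact sum_congr rfl fun i _ => by ring
  simp only [log_div (exp_ne_zero _) hZ, log_exp, mul_sub, sum_sub_distrib, ← sum_mul,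
    ← sum_div, ← expMoment_zero, div_self hZ, one_mul, hmean, entropy]
  ring

lemma hasDerivAt_entropy [Nonempty ι] (β : ℝ) :
    HasDerivAt (entropy y)
      (-β * ((expMoment y 0 β * expMoment y 2 β - expMoment y 1 β ^ 2) / expMoment y 0 β ^ 2))
      β := by
  have hZ := (expMoment_zero_pos y β).ne'
  have hlog := (hasDerivAt_expMoment y 0 β).log hZ
  have hmean := (hasDerivAt_expMoment y 1 β).div (hasDerivAt_expMoment y 0 β) hZ
  refine (hlog.sub ((hasDerivAt_id β).mul hmean)).congr_deriv ?_
  simp only [zero_add, Nat.reduceAdd, id_eq, Pi.div_apply]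
  ring

lemma entropy_antitoneOn [Nonempty ι] : AntitoneOn (entropy y) (Set.Ici 0) := by
  refine antitoneOn_of_hasDerivWithinAt_nonpos (convex_Ici 0)
    (fun β _ => (hasDerivAt_entropy y β).continuousAt.continuousWithinAt)
    (fun β _ => (hasDerivAt_entropy y β).hasDerivWithinAt) fun β hβ => ?_
  rw [interior_Ici, Set.mem_Ioi] at hβ
  exact mul_nonpos_of_nonpos_of_nonneg (neg_nonpos.2 hβ.le)
    (div_nonneg (sub_nonneg.2 (sq_expMoment_one_le y β)) (sq_nonneg _))

end GibbsDistribution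

lemma softmaxEntropy_eq (y : Fin 3 → ℝ) (β : ℝ) :
    softmaxEntropy y β = GibbsDistribution.entropy y β := by
  rw [← GibbsDistribution.neg_sum_mul_log_eq_entropy, GibbsDistribution.expMoment_zero]
  rfl

theorem stmt_0 (y : Fin 3 → ℝ) (β₁ β₂ : ℝ) (h1 : 0 < β₁) (h2 : β₁ ≤ β₂) :
    softmaxEntropy y β₂ ≤ softmaxEntropy y β₁ := by
  rw [softmaxEntropy_eq, softmaxEntropy_eq]
  exact GibbsDistribution.entropy_antitoneOn y (Set.mem_Ici.2 h1.le)
    (Set.mem_Ici.2 (h1.le.trans h2)) h2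
end

section
/- Let $y_0, y_1, y_2$ be real numbers, not all equal, and for $\beta > 0$ define $p_i(\beta) = e^{\beta y_i} / \sum_{j=0}^{2} e^{\beta y_j}$. Then the Shannon entropy $H(\beta) = -\sum_{i=0}^{2} p_i(\beta) \log p_i(\beta)$ is strictly decreasing in $\beta$ on $(0, \infty)$. -/
/-!
With `Z(β) = ∑ exp (β y_i)` and `M_k(β) = ∑ y_i ^ k exp (β y_i)` (so `Z' = M_1`, `M_1' = M_2`),
the entropy of the softmax distribution is `H = log Z - β M_1 / Z`, whence
`H'(β) = -β (M_2 Z - M_1 ^ 2) / Z ^ 2`: minus `β` times the variance of `y` under the softmax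
distribution. By Lagrange's identity `∑ᵢ ∑ⱼ wᵢ wⱼ (yᵢ - yⱼ)² = 2 ((∑ wᵢ yᵢ²)(∑ wᵢ) - (∑ wᵢ yᵢ)²)`
this variance is positive as soon as `y` is not constant, so `H' < 0` for `β > 0`.
-/

open Real Finset

section WeightedVariance

variable {ι : Type*} [Fintype ι] (w y : ι → ℝ)

theorem sum_sum_mul_mul_sub_sq :
    ∑ i, ∑ j, w i * w j * (y i - y j) ^ 2 =
      2 * ((∑ i, w i * y i ^ 2) * ∑ i, w i - (∑ i, w i * y i) ^ 2) := by
  have expand : ∀ i j, w i * w j * (y i - y j) ^ 2 =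
      w i * y i ^ 2 * w j - 2 * (w i * y i) * (w j * y j) + w i * (w j * y j ^ 2) := by
    intros; ring
  simp only [expand, sum_add_distrib, sum_sub_distrib, ← mul_sum, ← sum_mul]
  ring

variable {w y} in
theorem sq_sum_mul_lt_sum_mul_sq_mul_sum (hw : ∀ i, 0 < w i) {i j : ι} (hij : y i ≠ y j) :
    (∑ i, w i * y i) ^ 2 < (∑ i, w i * y i ^ 2) * ∑ i, w i := by
  have hterm : ∀ k l, 0 ≤ w k * w l * (y k - y l) ^ 2 := fun k l =>
    mul_nonneg (mul_pos (hw k) (hw l)).le (sq_nonneg _)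
  have hij' : 0 < w i * w j * (y i - y j) ^ 2 :=
    mul_pos (mul_pos (hw i) (hw j)) (pow_two_pos_of_ne_zero (sub_ne_zero.mpr hij))
  have hsum : 0 < ∑ k, ∑ l, w k * w l * (y k - y l) ^ 2 :=
    hij'.trans_le <| (single_le_sum (fun l _ => hterm i l) (mem_univ j)).trans <|
      single_le_sum (fun k _ => sum_nonneg fun l _ => hterm k l) (mem_univ i)
  rw [sum_sum_mul_mul_sub_sq] at hsum
  linarith

end WeightedVariance

section Gibbs

variable {ι : Type*} [Fintype ι] (y : ι → ℝ)

noncomputable def expMoment (k : ℕ) (β : ℝ) : ℝ := ∑ i, y i ^ k * exp (β * y i)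

theorem expMoment_zero (β : ℝ) : expMoment y 0 β = ∑ i, exp (β * y i) := by
  simp [expMoment]

theorem hasDerivAt_expMoment (k : ℕ) (β : ℝ) :
    HasDerivAt (expMoment y k) (expMoment y (k + 1) β) β := by
  refine HasDerivAt.fun_sum fun i _ => ?_
  refine (((hasDerivAt_mul_const (y i)).exp).const_mul (y i ^ k)).congr_deriv ?_
  ring

theorem expMoment_zero_pos [Nonempty ι] (β : ℝ) : 0 < expMoment y 0 β := by
  rw [expMoment_zero]
  exact sum_pos (fun i _ => exp_pos _) univ_nonempty

noncomputable def gibbsEntropy (β : ℝ) : ℝ :=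
  log (expMoment y 0 β) - β * (expMoment y 1 β / expMoment y 0 β)

theorem neg_sum_mul_log_eq_gibbsEntropy [Nonempty ι] (β : ℝ) :
    -∑ i, (exp (β * y i) / ∑ j, exp (β * y j)) * log (exp (β * y i) / ∑ j, exp (β * y j)) =
      gibbsEntropy y β := by
  have hZ := expMoment_zero_pos y β
  rw [expMoment_zero] at hZ
  simp only [gibbsEntropy, expMoment, pow_zero, one_mul, pow_one]
  simp only [log_div (exp_ne_zero _) hZ.ne', log_exp]
  simp only [mul_sub, sum_sub_distrib, ← sum_mul, ← sum_div, div_self hZ.ne', one_mul, neg_sub]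
  rw [sum_div, mul_sum]
  congr 1
  refine sum_congr rfl fun i _ => ?_
  ring

theorem hasDerivAt_gibbsEntropy [Nonempty ι] (β : ℝ) :
    HasDerivAt (gibbsEntropy y)
      (-(β * ((expMoment y 2 β * expMoment y 0 β - expMoment y 1 β ^ 2) /
        expMoment y 0 β ^ 2))) β := by
  have hZ := (expMoment_zero_pos y β).ne'
  refine (((hasDerivAt_expMoment y 0 β).log hZ).fun_sub ((hasDerivAt_id' β).fun_mul
    ((hasDerivAt_expMoment y 1 β).fun_div (hasDerivAt_expMoment y 0 β) hZ))).congr_deriv ?_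
  field_simp
  ring

variable {y} in
theorem strictAntiOn_gibbsEntropy {i j : ι} (hij : y i ≠ y j) :
    StrictAntiOn (gibbsEntropy y) (Set.Ioi 0) := by
  have : Nonempty ι := ⟨i⟩
  refine strictAntiOn_of_deriv_neg (convex_Ioi 0)
    (fun β _ => (hasDerivAt_gibbsEntropy y β).continuousAt.continuousWithinAt) fun β hβ => ?_
  rw [interior_Ioi] at hβ
  have hvar : 0 < expMoment y 2 β * expMoment y 0 β - expMoment y 1 β ^ 2 := by
    simpa [expMoment, mul_comm] using
      sub_pos.mpr (sq_sum_mul_lt_sum_mul_sq_mul_sum (fun k => exp_pos (β * y k)) hij)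
  rw [(hasDerivAt_gibbsEntropy y β).deriv, neg_lt_zero]
  exact mul_pos hβ (div_pos hvar (pow_pos (expMoment_zero_pos y β) 2))

end Gibbs

theorem stmt_1 (y : Fin 3 → ℝ) (hy : ¬ (y 0 = y 1 ∧ y 1 = y 2)) :
    StrictAntiOn (softmaxEntropy y) (Set.Ioi 0) := by
  have hentropy : softmaxEntropy y = gibbsEntropy y :=
    funext fun β => neg_sum_mul_log_eq_gibbsEntropy y β
  rw [hentropy]
  rcases not_and_or.mp hy with h | h <;> exact strictAntiOn_gibbsEntropy h
end
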